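/- The distribution-based inconsistency measure I_D, defined as I_D(K) = μ_D(K) for inconsistent K and 0 for consistent K, satisfies Monotony: for all finite knowledge bases K and K', I_D(K) ≤ I_D(K ∪ K'). -/

import Mathlib

inductive PropForm (V : Type) : Type
  | var : V → PropForm V
  | neg : PropForm V → PropForm V
  | conj : PropForm V → PropForm V → PropForm V
  | disj : PropForm V → PropForm V → PropForm V
  deriving DecidableEq

namespace PropForm
def eval {V : Type} (v : V → Bool) : PropForm V → Bool
  | var p => v p
  | neg f => !(eval v f)
  | conj f g => eval v f && eval v g
  | disj f g => eval v f || eval v g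
end PropForm

/-- A finite knowledge base `K` is satisfiable (consistent) if some valuation makes
all its formulas true. -/
def Sat {V : Type} (K : Finset (PropForm V)) : Prop :=
  ∃ v : V → Bool, ∀ f ∈ K, f.eval v = true

/-- `M` is a minimal unsatisfiable set: inconsistent, with every proper subset consistent. -/
def IsMUS {V : Type} (M : Finset (PropForm V)) : Prop :=
  ¬ Sat M ∧ ∀ M' ⊂ M, Sat M'

/-- The set of minimal unsatisfiable subsets of `K`. -/
def MUSes {V : Type} (K : Finset (PropForm V)) : Set (Finset (PropForm V)) :=
  {M | M ⊆ K ∧ IsMUS M}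

/-- A partial MUS-decomposition of `K`: a family of pairwise-disjoint inconsistent
subsets of `K` such that the MUSes of their union are exactly the disjoint union of
the MUSes of the components. -/
def IsPartialMUSdecomp {V : Type} [DecidableEq V] (K : Finset (PropForm V))
    (T : Finset (Finset (PropForm V))) : Prop :=
  (∀ Ki ∈ T, Ki ⊆ K ∧ ¬ Sat Ki) ∧
  (↑T : Set (Finset (PropForm V))).PairwiseDisjoint id ∧
  MUSes (T.sup id) = ⋃ Ki ∈ T, MUSes Ki ∧
  (↑T : Set (Finset (PropForm V))).Pairwise fun A B => Disjoint (MUSes A) (MUSes B)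

/-- The distribution index: maximal cardinality of a partial MUS-decomposition. -/
noncomputable def muD {V : Type} [DecidableEq V] (K : Finset (PropForm V)) : ℕ :=
  sSup {n : ℕ | ∃ T : Finset (Finset (PropForm V)), IsPartialMUSdecomp K T ∧ T.card = n}

open Classical in
/-- The distribution-based inconsistency measure. -/
noncomputable def ID {V : Type} [DecidableEq V] (K : Finset (PropForm V)) : ℕ :=
  if Sat K then 0 else muD K


theorem Sat.mono {V : Type} {K L : Finset (PropForm V)} (h : K ⊆ L) (hL : Sat L) : Sat K :=
  let ⟨v, hv⟩ := hL
  ⟨v, fun f hf => hv f (h hf)⟩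

theorem sat_empty {V : Type} : Sat (∅ : Finset (PropForm V)) :=
  ⟨fun _ => true, by simp⟩

theorem MUSes_empty {V : Type} : MUSes (∅ : Finset (PropForm V)) = ∅ := by
  ext M
  simp only [MUSes, IsMUS, Finset.subset_empty, Set.mem_empty_iff_false, iff_false]
  rintro ⟨rfl, hunsat, -⟩
  exact hunsat sat_empty

namespace IsPartialMUSdecomp

variable {V : Type} [DecidableEq V]

theorem empty (K : Finset (PropForm V)) : IsPartialMUSdecomp K ∅ :=
  ⟨by simp, by simp, by simp [MUSes_empty], by simp⟩

theorem mono {K L : Finset (PropForm V)} (h : K ⊆ L) {T : Finset (Finset (PropForm V))}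
    (hT : IsPartialMUSdecomp K T) : IsPartialMUSdecomp L T :=
  let ⟨hsub, hdisj, hMUSes, hMUSdisj⟩ := hT
  ⟨fun Ki hKi => ⟨(hsub Ki hKi).1.trans h, (hsub Ki hKi).2⟩, hdisj, hMUSes, hMUSdisj⟩

theorem card_le {K : Finset (PropForm V)} {T : Finset (Finset (PropForm V))}
    (hT : IsPartialMUSdecomp K T) : T.card ≤ K.powerset.card :=
  Finset.card_le_card fun Ki hKi => Finset.mem_powerset.mpr (hT.1 Ki hKi).1

end IsPartialMUSdecomp

theorem muD_mono {V : Type} [DecidableEq V] {K L : Finset (PropForm V)} (h : K ⊆ L) :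
    muD K ≤ muD L := by
  refine csSup_le_csSup ?bdd ⟨0, ∅, IsPartialMUSdecomp.empty K, rfl⟩ ?sub
  case bdd =>
    exact ⟨L.powerset.card, by rintro n ⟨T, hT, rfl⟩; exact hT.card_le⟩
  case sub =>
    rintro n ⟨T, hT, rfl⟩
    exact ⟨T, hT.mono h, rfl⟩

theorem ID_mono {V : Type} [DecidableEq V] {K L : Finset (PropForm V)} (h : K ⊆ L) :
    ID K ≤ ID L := by
  by_cases hK : Sat K
  · simp [ID, hK]
  · have hL : ¬ Sat L := fun hL => hK (hL.mono h)
    simpa only [ID, if_neg hK, if_neg hL] using muD_mono h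

theorem stmt12 {V : Type} [DecidableEq V] (K K' : Finset (PropForm V)) :
    ID K ≤ ID (K ∪ K') :=
  ID_mono Finset.subset_union_left
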